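/- Let B be a family of blocks in a monoid M with parameter type Θ, and assume additionally that every block index admits an identity parameter, i.e. for each i there exists e ∈ Θ with B i e = 1. Let n ≥ 1 and r ≥ 1. For any single parameter assignment θ for a zigzag of height n, there exists a parameter assignment ψ such that the r-th power (L_{1,n}(θ))^r = T_n(ψ); that is, r identical zigzags of height n compress into a single triangle of height n. -/

import Mathlib

/-- The cascade `C_{i,j}(θ) = B i (θ i) * B (i+1) (θ (i+1)) * ⋯ * B j (θ j)`. -/
def cascade {M Θ : Type*} [Monoid M] (B : ℕ → Θ → M) (i j : ℕ) (θ : ℕ → Θ) : M :=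
  ((List.range (j + 1 - i)).map (fun k => B (i + k) (θ (i + k)))).prod

/-- The triangle `T_n(θ) = C_{n,n} * C_{n-1,n} * ⋯ * C_{1,n}`, where the `k`-th cascade
`C_{n-k,n}` carries its own parameters `θ k`. -/
def triangle {M Θ : Type*} [Monoid M] (B : ℕ → Θ → M) (n : ℕ) (θ : ℕ → ℕ → Θ) : M :=
  ((List.range n).map (fun k => cascade B (n - k) n (θ k))).prod

/-- The zigzag `L_{1,n}(θ)`: the product of the odd-indexed blocks `B k (θ k)` for
`1 ≤ k ≤ n` (in increasing order of `k`), followed by the product of the even-indexed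
blocks `B k (θ k)` for `1 ≤ k ≤ n` (in increasing order of `k`). -/
def zigzag {M Θ : Type*} [Monoid M] (B : ℕ → Θ → M) (n : ℕ) (θ : ℕ → Θ) : M :=
  (((((List.range n).map (· + 1)).filter (fun k => k % 2 = 1)).map
      (fun k => B k (θ k))).prod) *
  (((((List.range n).map (· + 1)).filter (fun k => k % 2 = 0)).map
      (fun k => B k (θ k))).prod)

/-! A single block `B i α` with `1 ≤ i ≤ n` can be pushed into a triangle of height `n` from the
left: it commutes past the cascades `C_{k,n}` with `k ≥ i + 2`, merges with `C_{i+1,n}` into a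
cascade `C_{i,n}`, and the pair `C_{i,n} C_{i,n}` is turned back into `C_{i+1,n} C_{i,n}` by
one turnover per index and a final fusion. So the elements that a triangle absorbs on the left
form a submonoid containing every block, hence every power of a zigzag; applied to the triangle
with identity parameters this gives the theorem. -/

section Blocks

variable {M Θ : Type*} [Monoid M] (B : ℕ → Θ → M)

lemma cascade_of_lt {i j : ℕ} (h : j < i) (θ : ℕ → Θ) : cascade B i j θ = 1 := by
  simp [cascade, Nat.sub_eq_zero_of_le h]

lemma cascade_eq_mul {i j : ℕ} (h : i ≤ j) (θ : ℕ → Θ) :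
    cascade B i j θ = B i (θ i) * cascade B (i + 1) j θ := by
  rw [cascade, show j + 1 - i = j + 1 - (i + 1) + 1 by omega, List.range_succ_eq_map]
  simp only [List.map_cons, List.map_map, List.prod_cons, Nat.add_zero, cascade]
  congr 1
  refine congrArg List.prod (List.map_congr_left fun k _ => ?_)
  simp only [Function.comp_apply, Nat.succ_eq_add_one, show i + (k + 1) = i + 1 + k by omega]

lemma cascade_congr {i j : ℕ} {θ θ' : ℕ → Θ} (h : ∀ k, i ≤ k → k ≤ j → θ k = θ' k) :
    cascade B i j θ = cascade B i j θ' := by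
  refine congrArg List.prod (List.map_congr_left fun k hk => ?_)
  rw [List.mem_range] at hk
  rw [h (i + k) (by omega) (by omega)]

lemma block_mul_cascade_succ {i j : ℕ} (h : i ≤ j) (α : Θ) (θ : ℕ → Θ) :
    B i α * cascade B (i + 1) j θ = cascade B i j (Function.update θ i α) := by
  rw [cascade_eq_mul B h, Function.update_self,
    cascade_congr B fun k hk _ => Function.update_of_ne (by omega : k ≠ i) α θ]

lemma triangle_eq_one {e : ℕ → Θ} (he : ∀ i, B i (e i) = 1) (n : ℕ) :
    triangle B n (fun _ => e) = 1 :=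
  List.prod_eq_one <| by
    simp only [List.mem_map, List.mem_range]
    rintro _ ⟨k, -, rfl⟩
    exact List.prod_eq_one <| by
      simp only [List.mem_map, List.mem_range]
      rintro _ ⟨l, -, rfl⟩
      exact he _

def partialTriangle (m n : ℕ) (ψ : ℕ → ℕ → Θ) : M :=
  ((List.range m).map fun k => cascade B (n - k) n (ψ k)).prod

lemma triangle_eq_partialTriangle (n : ℕ) (ψ : ℕ → ℕ → Θ) :
    triangle B n ψ = partialTriangle B n n ψ :=
  rfl

lemma partialTriangle_succ (m n : ℕ) (ψ : ℕ → ℕ → Θ) :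
    partialTriangle B (m + 1) n ψ = partialTriangle B m n ψ * cascade B (n - m) n (ψ m) := by
  simp [partialTriangle, List.range_succ]

lemma partialTriangle_succ_update (m n : ℕ) (ψ : ℕ → ℕ → Θ) (φ : ℕ → Θ) :
    partialTriangle B (m + 1) n (Function.update ψ m φ) =
      partialTriangle B m n ψ * cascade B (n - m) n φ := by
  rw [partialTriangle_succ, Function.update_self]
  congr 1
  exact congrArg List.prod <| List.map_congr_left fun k hk => by
    rw [Function.update_of_ne (List.mem_range.1 hk).ne]

variable {B}
variable (hfusion : ∀ (i : ℕ) (α β : Θ), ∃ a : Θ, B i α * B i β = B i a)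
variable (hcomm : ∀ (i j : ℕ), 1 < Nat.dist i j → ∀ (α β : Θ),
  B i α * B j β = B j β * B i α)
variable (hturnover : ∀ (i : ℕ) (α β γ : Θ), ∃ a b c : Θ,
  B i α * B (i + 1) β * B i γ = B (i + 1) a * B i b * B (i + 1) c)

include hcomm in
lemma commute_block_cascade {i l : ℕ} (h : i + 1 < l) (j : ℕ) (α : Θ) (θ : ℕ → Θ) :
    Commute (B i α) (cascade B l j θ) := by
  refine Commute.list_prod_right _ _ fun x hx => ?_
  obtain ⟨k, -, rfl⟩ := List.mem_map.1 hx
  exact hcomm i (l + k) (by simp only [Nat.dist]; omega) α _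

include hcomm in
lemma commute_block_partialTriangle {i m n : ℕ} (h : i + m < n) (α : Θ) (ψ : ℕ → ℕ → Θ) :
    Commute (B i α) (partialTriangle B m n ψ) := by
  refine Commute.list_prod_right _ _ fun x hx => ?_
  obtain ⟨k, hk, rfl⟩ := List.mem_map.1 hx
  exact commute_block_cascade hcomm (by rw [List.mem_range] at hk; omega) n α _

include hfusion hcomm hturnover in
lemma exists_block_mul_cascade_mul_cascade {i j : ℕ} (hij : i ≤ j) (α : Θ) (θ φ : ℕ → Θ) :
    ∃ θ' φ' : ℕ → Θ, B i α * (cascade B (i + 1) j θ * cascade B i j φ) =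
      cascade B (i + 1) j θ' * cascade B i j φ' := by
  induction hij using Nat.decreasingInduction generalizing α θ φ with
  | self =>
    obtain ⟨a, ha⟩ := hfusion j α (φ j)
    refine ⟨θ, fun _ => a, ?_⟩
    simp only [cascade_eq_mul B le_rfl, cascade_of_lt B (Nat.lt_succ_self j), one_mul, mul_one,
      ha]
  | of_succ i hij ih =>
    obtain ⟨a, b, c, habc⟩ := hturnover i α (θ (i + 1)) (φ i)
    obtain ⟨θ', φ', hθφ⟩ := ih c θ φ
    have hi : i ≤ j := hij.le
    have hij : i + 1 ≤ j := hij
    refine ⟨Function.update θ' (i + 1) a, Function.update φ' i b, ?_⟩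
    calc B i α * (cascade B (i + 1) j θ * cascade B i j φ)
        = B i α * B (i + 1) (θ (i + 1)) * B i (φ i) *
            (cascade B (i + 1 + 1) j θ * cascade B (i + 1) j φ) := by
          rw [cascade_eq_mul B hij, cascade_eq_mul B hi φ]
          simp only [mul_assoc]
          rw [(commute_block_cascade hcomm (by omega) j (φ i) θ).left_comm]
      _ = B (i + 1) a * B i b * (B (i + 1) c *
            (cascade B (i + 1 + 1) j θ * cascade B (i + 1) j φ)) := by
          rw [habc]; simp only [mul_assoc]
      _ = B (i + 1) a * (cascade B (i + 1 + 1) j θ' * (B i b * cascade B (i + 1) j φ')) := by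
          rw [hθφ, mul_assoc, (commute_block_cascade hcomm (by omega) j b θ').left_comm]
      _ = cascade B (i + 1) j (Function.update θ' (i + 1) a) *
            cascade B i j (Function.update φ' i b) := by
          rw [block_mul_cascade_succ B hi, ← mul_assoc, block_mul_cascade_succ B hij]

include hfusion hcomm hturnover in
lemma exists_block_mul_partialTriangle {i m n : ℕ} (hin : i ≤ n) (hni : n < i + m) (α : Θ)
    (ψ : ℕ → ℕ → Θ) : ∃ ψ', B i α * partialTriangle B m n ψ = partialTriangle B m n ψ' := by
  induction m with
  | zero => omega
  | succ m ih =>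
    rw [partialTriangle_succ]
    by_cases hm : n < i + m
    · obtain ⟨ψ₁, hψ₁⟩ := ih hm
      exact ⟨Function.update ψ₁ m (ψ m), by rw [← mul_assoc, hψ₁, partialTriangle_succ_update]⟩
    have hi : n - m = i := by omega
    rw [hi]
    cases m with
    | zero =>
      obtain rfl : i = n := by omega
      obtain ⟨_, φ', h⟩ := exists_block_mul_cascade_mul_cascade hfusion hcomm hturnover hin α
        (ψ 0) (ψ 0)
      simp only [cascade_of_lt B (Nat.lt_add_one i), one_mul] at h
      refine ⟨Function.update ψ 0 φ', ?_⟩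
      rw [partialTriangle_succ_update, hi, show partialTriangle B 0 i ψ = 1 from rfl, one_mul,
        one_mul, h]
    | succ m =>
      have hi' : n - m = i + 1 := by omega
      obtain ⟨θ', φ', h⟩ := exists_block_mul_cascade_mul_cascade hfusion hcomm hturnover hin α
        (ψ m) (ψ (m + 1))
      refine ⟨Function.update (Function.update ψ m θ') (m + 1) φ', ?_⟩
      rw [partialTriangle_succ, partialTriangle_succ_update, partialTriangle_succ_update, hi, hi']
      simp only [mul_assoc]
      rw [← h]
      exact (commute_block_partialTriangle hcomm (by omega) α ψ).left_comm _

variable (B) in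
def triangleAbsorbers (n : ℕ) : Submonoid M where
  carrier := {x | ∀ ψ, ∃ ψ', x * triangle B n ψ = triangle B n ψ'}
  one_mem' ψ := ⟨ψ, one_mul _⟩
  mul_mem' {x y} hx hy ψ := by
    obtain ⟨ψ₁, h₁⟩ := hy ψ
    obtain ⟨ψ₂, h₂⟩ := hx ψ₁
    exact ⟨ψ₂, by rw [mul_assoc, h₁, h₂]⟩

include hfusion hcomm hturnover in
lemma block_mem_triangleAbsorbers {i n : ℕ} (h₁ : 1 ≤ i) (h₂ : i ≤ n) (α : Θ) :
    B i α ∈ triangleAbsorbers B n := fun ψ => by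
  simpa only [triangle_eq_partialTriangle] using
    exists_block_mul_partialTriangle hfusion hcomm hturnover h₂ (by omega) α ψ

include hfusion hcomm hturnover in
lemma zigzag_mem_triangleAbsorbers (n : ℕ) (θ : ℕ → Θ) :
    zigzag B n θ ∈ triangleAbsorbers B n := by
  have hblocks (p : ℕ → Bool) :
      ((((List.range n).map (· + 1)).filter p).map fun k => B k (θ k)).prod ∈
        triangleAbsorbers B n := by
    refine Submonoid.list_prod_mem _ fun x hx => ?_
    simp only [List.mem_map, List.mem_filter, List.mem_range] at hx
    obtain ⟨_, ⟨⟨k, hk, rfl⟩, -⟩, rfl⟩ := hx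
    exact block_mem_triangleAbsorbers hfusion hcomm hturnover (by omega) (by omega) _
  exact mul_mem (hblocks _) (hblocks _)

end Blocks

theorem zigzag_power_compression_general {M Θ : Type*} [Monoid M] (B : ℕ → Θ → M)
    (hfusion : ∀ (i : ℕ) (α β : Θ), ∃ a : Θ, B i α * B i β = B i a)
    (hcomm : ∀ (i j : ℕ), 1 < Nat.dist i j → ∀ (α β : Θ),
      B i α * B j β = B j β * B i α)
    (hturnover : ∀ (i : ℕ) (α β γ : Θ), ∃ a b c : Θ,
      B i α * B (i + 1) β * B i γ = B (i + 1) a * B i b * B (i + 1) c)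
    (hid : ∀ i : ℕ, ∃ e : Θ, B i e = 1)
    (n r : ℕ) :
    ∀ θ : ℕ → Θ, ∃ ψ : ℕ → ℕ → Θ,
      (zigzag B n θ) ^ r = triangle B n ψ := by
  intro θ
  choose e he using hid
  obtain ⟨ψ, hψ⟩ := pow_mem (zigzag_mem_triangleAbsorbers hfusion hcomm hturnover n θ) r
    (fun _ => e)
  exact ⟨ψ, by rw [← hψ, triangle_eq_one B he, mul_one]⟩

/-- **Corollary (compression for time-independent Hamiltonians).**  Let `B` be a family of
blocks in a monoid `M` (satisfying fusion, commutation and turnover) such that every block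
index admits an identity parameter.  For `n ≥ 1` and `r ≥ 1`, the `r`-th power of a single
zigzag of height `n` compresses into a single triangle of height `n`. -/
theorem zigzag_power_compression {M Θ : Type*} [Monoid M] (B : ℕ → Θ → M)
    (hfusion : ∀ (i : ℕ) (α β : Θ), ∃ a : Θ, B i α * B i β = B i a)
    (hcomm : ∀ (i j : ℕ), 1 < Nat.dist i j → ∀ (α β : Θ),
      B i α * B j β = B j β * B i α)
    (hturnover : ∀ (i : ℕ) (α β γ : Θ), ∃ a b c : Θ,
      B i α * B (i + 1) β * B i γ = B (i + 1) a * B i b * B (i + 1) c)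
    (hid : ∀ i : ℕ, ∃ e : Θ, B i e = 1)
    (n r : ℕ) (hn : 1 ≤ n) (hr : 1 ≤ r) :
    ∀ θ : ℕ → Θ, ∃ ψ : ℕ → ℕ → Θ,
      (zigzag B n θ) ^ r = triangle B n ψ :=
  zigzag_power_compression_general B hfusion hcomm hturnover hid n r
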